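/- For every m ≥ 0: there exists a player-1 strategy π_1 in the labeled game graph Ḡ such that for every player-2 strategy π_2, |L(ω(v_in,π_1,π_2))| ≥ m + 1, if and only if every vertex cover of the graph G has size at least m. Equivalently, the maximal number of propositions player 1 can guarantee to visit in Ḡ equals the minimum size of a vertex cover of G plus one. -/

import Mathlib

/-- `π` is a valid strategy for the player owning the vertices satisfying `owns`:
for every history `w` and current vertex `v` owned by the player, the chosen
successor `π w v` is along an edge of the game graph. -/
def IsStrat {V : Type*} (E : V → V → Prop) (owns : V → Prop)
    (π : List V → V → V) : Prop :=
  ∀ (w : List V) (v : V), owns v → E v (π w v)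

/-- Auxiliary function computing, after `i` steps of the play from `v`, the pair
(current vertex, history of previously visited vertices).  Here `P1 v = true` means
`v` is a player-1 vertex, and `P1 v = false` that it is a player-2 vertex. -/
def playSeq {V : Type*} (P1 : V → Bool) (π1 π2 : List V → V → V) (v : V) :
    ℕ → V × List V
  | 0 => (v, [])
  | i + 1 =>
    let p := playSeq P1 π1 π2 v i
    (if P1 p.1 then π1 p.2 p.1 else π2 p.2 p.1, p.2 ++ [p.1])

/-- The unique play `ω(v, π1, π2)`: the `i`-th vertex of the infinite play starting
at `v` in which player 1 (resp. player 2) resolves choices at vertices `u` with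
`P1 u = true` (resp. `P1 u = false`) using strategy `π1` (resp. `π2`). -/
def play {V : Type*} (P1 : V → Bool) (π1 π2 : List V → V → V) (v : V) (i : ℕ) : V :=
  (playSeq P1 π1 π2 v i).1

/-- `U` is a vertex cover of the undirected graph `G`: every edge of `G` has at
least one endpoint in `U`. -/
def IsVertexCover {V : Type*} (G : SimpleGraph V) (U : Set V) : Prop :=
  ∀ a b : V, G.Adj a b → a ∈ U ∨ b ∈ U

/-- The vertices of the labeled game graph `Ḡ` built from the undirected graph `G`:
the initial vertex `v_in` (`Sum.inl ()`), a vertex for each edge `e` of `G`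
(`Sum.inr (Sum.inl e)`), and a vertex `(e,u)` for each edge `e` and endpoint `u` of
`e` (`Sum.inr (Sum.inr ...)`). -/
def BarV {V : Type*} (G : SimpleGraph V) : Type _ :=
  Unit ⊕ (G.edgeSet ⊕ {p : Sym2 V × V // p.1 ∈ G.edgeSet ∧ p.2 ∈ p.1})

/-- The edges of `Ḡ`: from `v_in` to every edge-vertex, from each edge-vertex `e` to
the endpoint vertices `(e,u)` with `u ∈ e`, and from every endpoint vertex back to
`v_in`. -/
def BarE {V : Type*} (G : SimpleGraph V) : BarV G → BarV G → Prop
  | Sum.inl _, Sum.inr (Sum.inl _) => True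
  | Sum.inr (Sum.inl e), Sum.inr (Sum.inr p) => p.val.1 = e.val
  | Sum.inr (Sum.inr _), Sum.inl _ => True
  | _, _ => False

/-- The partition of the vertices of `Ḡ`: the edge-vertices belong to player 2 and
all other vertices belong to player 1. -/
def BarP1 {V : Type*} (G : SimpleGraph V) : BarV G → Bool
  | Sum.inr (Sum.inl _) => false
  | _ => true

/-- The labeling of `Ḡ` with propositions `AP = V ∪ {$}`, encoded as `Option V`
(with `none` playing the role of `$`): the initial vertex and the edge-vertices are
labeled `{$}`, and each endpoint vertex `(e,u)` is labeled `{u}`. -/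
def BarL {V : Type*} (G : SimpleGraph V) : BarV G → Set (Option V)
  | Sum.inr (Sum.inr p) => {some p.val.2}
  | _ => {none}

/-!
A vertex cover `U` gives player 2 the strategy of answering each edge with an endpoint in `U`;
then only `$` and labels from `U` are ever visited, at most `|U| + 1` propositions. Conversely,
player 1 greedily proposes an edge with no visited endpoint. As long as the visited vertices do
not cover `G`, each round `v_in → e → (e, u) → v_in` visits a new vertex; once they do cover `G`
there are already at least `m` of them. Either way, `m` rounds visit `m` vertices besides `$`.
-/

section Play

variable {W : Type*} (P1 : W → Bool) (π1 π2 : List W → W → W) (v : W)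

theorem play_succ (i : ℕ) :
    play P1 π1 π2 v (i + 1) =
      if P1 (play P1 π1 π2 v i) then π1 (playSeq P1 π1 π2 v i).2 (play P1 π1 π2 v i)
      else π2 (playSeq P1 π1 π2 v i).2 (play P1 π1 π2 v i) := rfl

theorem playSeq_snd (n : ℕ) :
    (playSeq P1 π1 π2 v n).2 = (List.range n).map (play P1 π1 π2 v) := by
  induction n with
  | zero => rfl
  | succ n ih => rw [List.range_succ, List.map_append, ← ih]; rfl

variable {P1 π1 π2} in
theorem play_succ_rel {E : W → W → Prop} (h1 : IsStrat E (P1 · = true) π1)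
    (h2 : IsStrat E (P1 · = false) π2) (i : ℕ) :
    E (play P1 π1 π2 v i) (play P1 π1 π2 v (i + 1)) := by
  rw [play_succ]
  cases h : P1 (play P1 π1 π2 v i)
  · simpa [h] using h2 _ _ h
  · simpa [h] using h1 _ _ h

end Play

theorem le_ncard_of_ssubset_succ_unless {α : Type*} [Finite α] {P : Set α → Prop} {m : ℕ}
    (hP : ∀ U, P U → m ≤ U.ncard) {S : ℕ → Set α} (hmono : ∀ k, S k ⊆ S (k + 1))
    (hgrow : ∀ k, ¬ P (S k) → S k ⊂ S (k + 1)) : m ≤ (S m).ncard := by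
  suffices h : ∀ k, min k m ≤ (S k).ncard by simpa using h m
  intro k
  induction k with
  | zero => simp
  | succ k ih =>
    have hle := Set.ncard_le_ncard (hmono k)
    by_cases hk : P (S k)
    · have := hP _ hk
      omega
    · have := Set.ncard_lt_ncard (hgrow k hk)
      omega

theorem Set.ncard_insert_none_image_some {α : Type*} [Finite α] (s : Set α) :
    (insert none (some '' s)).ncard = s.ncard + 1 := by
  rw [Set.ncard_insert_of_notMem (by simp),
    Set.ncard_image_of_injective _ (Option.some_injective α)]

section GameGraph

variable {V : Type*} {G : SimpleGraph V}

/-- `v_in`, with type `BarV G` rather than the unfolded sum type of `Sum.inl ()`, so that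
rewriting inside plays from it typechecks. -/
def BarV.init (G : SimpleGraph V) : BarV G := Sum.inl ()

theorem BarE.exists_eq_edge {x : BarV G} (h : BarE G (BarV.init G) x) :
    ∃ e, x = Sum.inr (Sum.inl e) := by
  unfold BarV.init at h
  match x, h with
  | Sum.inr (Sum.inl e), _ => exact ⟨e, rfl⟩

theorem BarE.exists_eq_endpoint {e : G.edgeSet} {x : BarV G}
    (h : BarE G (Sum.inr (Sum.inl e)) x) :
    ∃ p, x = Sum.inr (Sum.inr p) ∧ p.1.1 = e := by
  match x, h with
  | Sum.inr (Sum.inr p), h => exact ⟨p, rfl, h⟩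

theorem BarE.eq_init {p} {x : BarV G} (h : BarE G (Sum.inr (Sum.inr p)) x) :
    x = BarV.init G := by
  match x, h with
  | Sum.inl (), _ => rfl

theorem barL_eq_of_barE {u x : BarV G} (h : BarE G u x) (hu : BarP1 G u = true) :
    BarL G x = {none} := by
  match u, x, h with
  | Sum.inl _, Sum.inr (Sum.inl _), _ => exact rfl
  | Sum.inr (Sum.inl _), _, _ => simp [BarP1] at hu
  | Sum.inr (Sum.inr _), Sum.inl _, _ => exact rfl

variable {π1 π2 : List (BarV G) → BarV G → BarV G}

theorem play_three_mul (h1 : IsStrat (BarE G) (BarP1 G · = true) π1)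
    (h2 : IsStrat (BarE G) (BarP1 G · = false) π2) (k : ℕ) :
    play (BarP1 G) π1 π2 (BarV.init G) (3 * k) = BarV.init G := by
  induction k with
  | zero => rfl
  | succ k ih =>
    have rel := play_succ_rel (BarV.init G) h1 h2
    obtain ⟨e, he⟩ := BarE.exists_eq_edge (ih ▸ rel (3 * k))
    obtain ⟨p, hp, -⟩ := BarE.exists_eq_endpoint (he ▸ rel (3 * k + 1))
    exact BarE.eq_init (hp ▸ rel (3 * k + 2))

theorem IsVertexCover.exists_endpoint_mem {U : Set V} (hU : IsVertexCover G U) (e : G.edgeSet) :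
    ∃ u ∈ (e : Sym2 V), u ∈ U := by
  obtain ⟨e, he⟩ := e
  induction e using Sym2.ind with
  | _ a b =>
    rcases hU a b (G.mem_edgeSet.mp he) with h | h
    · exact ⟨a, Sym2.mem_mk_left a b, h⟩
    · exact ⟨b, Sym2.mem_mk_right a b, h⟩

def endpointStrat (f : G.edgeSet → V) (hf : ∀ e : G.edgeSet, f e ∈ (e : Sym2 V)) :
    List (BarV G) → BarV G → BarV G
  | _, Sum.inr (Sum.inl e) => Sum.inr (Sum.inr ⟨(e, f e), e.2, hf e⟩)
  | _, _ => BarV.init G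

variable {f : G.edgeSet → V} {hf : ∀ e : G.edgeSet, f e ∈ (e : Sym2 V)}

theorem endpointStrat_isStrat :
    IsStrat (BarE G) (BarP1 G · = false) (endpointStrat f hf) := by
  intro w u hu
  match u with
  | Sum.inr (Sum.inl _) => exact rfl
  | Sum.inl _ | Sum.inr (Sum.inr _) => simp [BarP1] at hu

theorem barL_play_endpointStrat_subset (h1 : IsStrat (BarE G) (BarP1 G · = true) π1) (i : ℕ) :
    BarL G (play (BarP1 G) π1 (endpointStrat f hf) (BarV.init G) i) ⊆
      insert none (some '' Set.range f) := by
  cases i with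
  | zero => exact Set.singleton_subset_iff.2 (Set.mem_insert _ _)
  | succ i =>
    cases hx : BarP1 G (play (BarP1 G) π1 (endpointStrat f hf) (BarV.init G) i)
    · rw [play_succ, hx]
      generalize play (BarP1 G) π1 (endpointStrat f hf) (BarV.init G) i = x at hx ⊢
      match x, hx with
      | Sum.inr (Sum.inl e), _ =>
        exact Set.singleton_subset_iff.2 (Set.mem_insert_of_mem _ ⟨f e, ⟨e, rfl⟩, rfl⟩)
    · rw [barL_eq_of_barE (play_succ_rel _ h1 endpointStrat_isStrat i) hx]
      exact Set.singleton_subset_iff.2 (Set.mem_insert _ _)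

theorem ncard_labels_endpointStrat_le [Finite V]
    (h1 : IsStrat (BarE G) (BarP1 G · = true) π1) :
    (⋃ i, BarL G (play (BarP1 G) π1 (endpointStrat f hf) (BarV.init G) i)).ncard ≤
      (Set.range f).ncard + 1 :=
  Set.ncard_insert_none_image_some (Set.range f) ▸
    Set.ncard_le_ncard (Set.iUnion_subset (barL_play_endpointStrat_subset h1))

theorem IsVertexCover.exists_strat_ncard_labels_le [Finite V] {U : Set V}
    (hU : IsVertexCover G U) (h1 : IsStrat (BarE G) (BarP1 G · = true) π1) :
    ∃ π2, IsStrat (BarE G) (BarP1 G · = false) π2 ∧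
      (⋃ i, BarL G (play (BarP1 G) π1 π2 (BarV.init G) i)).ncard ≤ U.ncard + 1 := by
  choose f hf hfU using hU.exists_endpoint_mem
  refine ⟨endpointStrat f hf, endpointStrat_isStrat, ?_⟩
  have : (Set.range f).ncard ≤ U.ncard := Set.ncard_le_ncard (Set.range_subset_iff.2 hfU)
  have := ncard_labels_endpointStrat_le (hf := hf) h1
  omega

def visitedVertices (w : List (BarV G)) : Set V := {u | ∃ x ∈ w, some u ∈ BarL G x}

theorem visitedVertices_mono {w w' : List (BarV G)} (h : w ⊆ w') :
    visitedVertices w ⊆ visitedVertices w' :=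
  fun _ ⟨x, hx, hu⟩ => ⟨x, h hx, hu⟩

theorem insert_none_image_visitedVertices_subset (P1 : BarV G → Bool)
    (π1 π2 : List (BarV G) → BarV G → BarV G) (n : ℕ) :
    insert none (some '' visitedVertices (playSeq P1 π1 π2 (BarV.init G) n).2) ⊆
      ⋃ i, BarL G (play P1 π1 π2 (BarV.init G) i) := by
  rintro _ (rfl | ⟨u, ⟨x, hx, hu⟩, rfl⟩)
  · exact Set.mem_iUnion.2 ⟨0, rfl⟩
  · rw [playSeq_snd] at hx
    obtain ⟨i, -, rfl⟩ := List.mem_map.1 hx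
    exact Set.mem_iUnion.2 ⟨i, hu⟩

theorem exists_edge_forall_notMem_of_not_isVertexCover {S : Set V}
    (hS : ¬ IsVertexCover G S) : ∃ e : G.edgeSet, ∀ u ∈ (e : Sym2 V), u ∉ S := by
  simp only [IsVertexCover, not_forall, not_or] at hS
  obtain ⟨a, b, hab, ha, hb⟩ := hS
  refine ⟨⟨s(a, b), hab⟩, fun u hu => ?_⟩
  rcases Sym2.mem_iff.1 hu with rfl | rfl <;> assumption

open Classical in
noncomputable def freshEdge (e₀ : G.edgeSet) (S : Set V) : G.edgeSet :=
  if h : ∃ e : G.edgeSet, ∀ u ∈ (e : Sym2 V), u ∉ S then h.choose else e₀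

theorem freshEdge_spec (e₀ : G.edgeSet) {S : Set V} (hS : ¬ IsVertexCover G S) :
    ∀ u ∈ (freshEdge e₀ S : Sym2 V), u ∉ S := by
  have h := exists_edge_forall_notMem_of_not_isVertexCover hS
  rw [freshEdge, dif_pos h]
  exact h.choose_spec

noncomputable def greedyStrat (e₀ : G.edgeSet) : List (BarV G) → BarV G → BarV G
  | w, Sum.inl _ => Sum.inr (Sum.inl (freshEdge e₀ (visitedVertices w)))
  | _, _ => BarV.init G

theorem greedyStrat_isStrat (e₀ : G.edgeSet) :
    IsStrat (BarE G) (BarP1 G · = true) (greedyStrat e₀) := by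
  intro w u hu
  match u with
  | Sum.inl _ | Sum.inr (Sum.inr _) => exact trivial
  | Sum.inr (Sum.inl _) => simp [BarP1] at hu

theorem visitedVertices_playSeq_mono (P1 : BarV G → Bool)
    (π1 π2 : List (BarV G) → BarV G → BarV G) (v : BarV G) {m n : ℕ} (h : m ≤ n) :
    visitedVertices (playSeq P1 π1 π2 v m).2 ⊆ visitedVertices (playSeq P1 π1 π2 v n).2 := by
  rw [playSeq_snd, playSeq_snd]
  exact visitedVertices_mono (List.map_subset _ (List.range_subset.2 h))

/-- Player 1 proposes an edge with both endpoints unvisited, so player 2's answer is new. -/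
theorem exists_mem_visitedVertices_greedyStrat (e₀ : G.edgeSet)
    (h2 : IsStrat (BarE G) (BarP1 G · = false) π2) (k : ℕ)
    (hS : ¬ IsVertexCover G
      (visitedVertices (playSeq (BarP1 G) (greedyStrat e₀) π2 (BarV.init G) (3 * k)).2)) :
    ∃ u ∈ visitedVertices (playSeq (BarP1 G) (greedyStrat e₀) π2 (BarV.init G) (3 * (k + 1))).2,
      u ∉ visitedVertices (playSeq (BarP1 G) (greedyStrat e₀) π2 (BarV.init G) (3 * k)).2 := by
  have h0 := play_three_mul (greedyStrat_isStrat e₀) h2 k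
  have h1 : play (BarP1 G) (greedyStrat e₀) π2 (BarV.init G) (3 * k + 1) =
      Sum.inr (Sum.inl (freshEdge e₀
        (visitedVertices (playSeq (BarP1 G) (greedyStrat e₀) π2 (BarV.init G) (3 * k)).2))) := by
    rw [play_succ, h0]
    rfl
  obtain ⟨p, hp, hpe⟩ := BarE.exists_eq_endpoint
    (h1 ▸ play_succ_rel _ (greedyStrat_isStrat e₀) h2 (3 * k + 1))
  refine ⟨p.1.2, ⟨Sum.inr (Sum.inr p), hp ▸ ?_, rfl⟩, freshEdge_spec e₀ hS _ (hpe ▸ p.2.2)⟩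
  rw [playSeq_snd]
  exact List.mem_map_of_mem (List.mem_range.2 (by omega))

theorem exists_strat_le_ncard_labels [Finite V] (hne : G.edgeSet.Nonempty) {m : ℕ}
    (hcov : ∀ U, IsVertexCover G U → m ≤ U.ncard) :
    ∃ π1, IsStrat (BarE G) (BarP1 G · = true) π1 ∧
      ∀ π2, IsStrat (BarE G) (BarP1 G · = false) π2 →
        m + 1 ≤ (⋃ i, BarL G (play (BarP1 G) π1 π2 (BarV.init G) i)).ncard := by
  obtain ⟨e₀, he₀⟩ := hne
  refine ⟨greedyStrat ⟨e₀, he₀⟩, greedyStrat_isStrat _, fun π2 h2 => ?_⟩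
  set S : ℕ → Set V := fun k =>
    visitedVertices (playSeq (BarP1 G) (greedyStrat ⟨e₀, he₀⟩) π2 (BarV.init G) (3 * k)).2
  have hmono : ∀ k, S k ⊆ S (k + 1) := fun k => visitedVertices_playSeq_mono _ _ _ _ (by omega)
  have hm : m ≤ (S m).ncard := le_ncard_of_ssubset_succ_unless hcov hmono fun k hk =>
    (Set.ssubset_iff_of_subset (hmono k)).2 (exists_mem_visitedVertices_greedyStrat _ h2 k hk)
  calc m + 1 ≤ (insert none (some '' S m)).ncard := by
        rw [Set.ncard_insert_none_image_some]; omega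
    _ ≤ _ := Set.ncard_le_ncard (insert_none_image_visitedVertices_subset _ _ _ _)

end GameGraph

/-- For every `m ≥ 0`: there exists a player-1 strategy `π_1` in the labeled game
graph `Ḡ` such that for every player-2 strategy `π_2`,
`|L(ω(v_in,π_1,π_2))| ≥ m + 1`, if and only if every vertex cover of the graph `G`
has size at least `m`.  Equivalently, the maximal number of propositions player 1
can guarantee to visit in `Ḡ` equals the minimum size of a vertex cover of `G`
plus one. -/
theorem game_coverage_iff_vertex_cover_lower_bound
    {V : Type*} [Fintype V] (G : SimpleGraph V) (hne : G.edgeSet.Nonempty)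
    (m : ℕ) :
    (∃ π1, IsStrat (BarE G) (fun v => BarP1 G v = true) π1 ∧
        ∀ π2, IsStrat (BarE G) (fun v => BarP1 G v = false) π2 →
          m + 1 ≤ (⋃ i : ℕ, BarL G (play (BarP1 G) π1 π2 (Sum.inl ()) i)).ncard) ↔
      (∀ U : Set V, IsVertexCover G U → m ≤ U.ncard) := by
  refine ⟨fun ⟨π1, h1, hwin⟩ U hU => ?_, exists_strat_le_ncard_labels hne⟩
  obtain ⟨π2, h2, hle⟩ := hU.exists_strat_ncard_labels_le h1
  exact Nat.add_le_add_iff_right.1 ((hwin π2 h2).trans hle)
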